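/- Every r ∈ Q_E can be written as r = τ_{r_m} ∘ τ_{r_{m−1}} ∘ ⋯ ∘ τ_{r_1}(r_0) for some m ≥ 0 and r_0, r_1, …, r_m ∈ Q_UT (when m = 0 this means r = r_0 ∈ Q_UT). -/

import Mathlib

open Filter Set
open scoped Classical

noncomputable section

/-- The Gauss map `G(x) = 1/x - ⌊1/x⌋` for `x ≠ 0`, `G(0) = 0`. -/
def gaussMap (x : ℝ) : ℝ := if x = 0 then 0 else 1 / x - ⌊1 / x⌋

/-- The value of the finite continued fraction `[0; a₁, …, aₙ]`. -/
def cfVal : List ℕ+ → ℝ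
  | [] => 0
  | a :: l => 1 / ((a : ℝ) + cfVal l)

/-- The value of the infinite continued fraction `[0; a₁, a₂, …]`
(the limit of the convergents). -/
def cfValInf (a : ℕ → ℕ+) : ℝ :=
  limUnder atTop (fun n => cfVal (List.ofFn fun i : Fin n => a i))

/-- The purely periodic sequence repeating the string `S`. -/
def perSeq (S : List ℕ+) : ℕ → ℕ+ := fun n => S.getD (n % S.length) 1

/-- `[0; overline{S}]`. -/
def cfPer (S : List ℕ+) : ℝ := cfValInf (perSeq S)

/-- The eventually periodic sequence starting with `T` and then repeating `S`. -/
def preperSeq (T S : List ℕ+) : ℕ → ℕ+ :=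
  fun n => if n < T.length then T.getD n 1 else S.getD ((n - T.length) % S.length) 1

/-- The continued fraction expansion of `r` of even length (when it exists). -/
def evenExp (r : ℝ) : List ℕ+ :=
  if h : ∃ S : List ℕ+, S ≠ [] ∧ Even S.length ∧ cfVal S = r then h.choose else []

/-- The continued fraction expansion of `r` of odd length (when it exists). -/
def oddExp (r : ℝ) : List ℕ+ :=
  if h : ∃ S : List ℕ+, S ≠ [] ∧ Odd S.length ∧ cfVal S = r then h.choose else []

/-- The golden ratio `g = (√5 - 1)/2`. -/
def gGolden : ℝ := (Real.sqrt 5 - 1) / 2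

/-- The quadratic interval `I_r = ([0; overline{S₁}], [0; overline{S₀}])`. -/
def quadInt (r : ℝ) : Set ℝ := Set.Ioo (cfPer (oddExp r)) (cfPer (evenExp r))

/-- The bifurcation (exceptional) set `E = [0,g] \ ⋃_{r ∈ ℚ ∩ (0,1)} I_r`. -/
def ESet : Set ℝ :=
  Set.Icc 0 gGolden \
    ⋃ r ∈ {x : ℝ | x ∈ Set.Ioo (0 : ℝ) 1 ∧ ∃ q : ℚ, (q : ℝ) = x}, quadInt r

/-- `Q_E`: the set of rationals `r ∈ (0,1)` whose quadratic interval `I_r` is maximal,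
i.e. is a connected component of `[0,g] \ E`. -/
def QE : Set ℝ :=
  {r | r ∈ Set.Ioo (0 : ℝ) 1 ∧ (∃ q : ℚ, (q : ℝ) = r) ∧
    ∃ x ∈ quadInt r, connectedComponentIn (Set.Icc 0 gGolden \ ESet) x = quadInt r}

/-- `ω(r) = [0; S₁ overline{S₀}]`. -/
def omegaPt (r : ℝ) : ℝ := cfValInf (preperSeq (oddExp r) (evenExp r))

/-- The tuning window `W_r = [ω(r), α₀)`. -/
def Wwin (r : ℝ) : Set ℝ := Set.Ico (omegaPt r) (cfPer (evenExp r))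

/-- The `(n+1)`-st continued fraction digit of `x`: `a_{n+1} = ⌊1/G^n(x)⌋`. -/
def cfDigit (x : ℝ) (n : ℕ) : ℕ+ := (⌊1 / (gaussMap^[n] x)⌋).toNat.toPNat'

/-- Concatenation of the first `n` blocks of a sequence of strings. -/
def blocksCat (B : ℕ → List ℕ+) : ℕ → List ℕ+
  | 0 => []
  | n + 1 => blocksCat B n ++ B n

/-- The infinite string obtained by concatenating all the blocks `B 0, B 1, …`
(each block assumed nonempty). -/
def flattenBlocks (B : ℕ → List ℕ+) : ℕ → ℕ+ :=
  fun n => (blocksCat B (n + 1)).getD n 1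

/-- Tuning substitution on a single digit: `a ↦ S₁ S₀^{a-1}`. -/
def tuneDigit (r : ℝ) (a : ℕ+) : List ℕ+ :=
  oddExp r ++ (List.replicate ((a : ℕ) - 1) (evenExp r)).flatten

/-- Tuning substitution on finite strings:
`(a₁, …, aₙ) ↦ S₁ S₀^{a₁-1} S₁ S₀^{a₂-1} ⋯ S₁ S₀^{aₙ-1}`. -/
def tuneList (r : ℝ) (A : List ℕ+) : List ℕ+ := (A.map (tuneDigit r)).flatten

/-- The tuning map `τ_r : [0,1] → [0,r]`:  `τ_r(0) = ω(r)`,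
`τ_r([0; a₁, a₂, …]) = [0; S₁ S₀^{a₁-1} S₁ S₀^{a₂-1} …]`, the same substitution
being applied to a finite expansion when the argument is rational. -/
def tune (r : ℝ) (x : ℝ) : ℝ :=
  if x = 0 then omegaPt r
  else if ∃ q : ℚ, (q : ℝ) = x then cfVal (tuneList r (evenExp x))
  else cfValInf (flattenBlocks (fun k => tuneDigit r (cfDigit x k)))

/-- The matching index `⟦A⟧ = a₁ - a₂ + a₃ - ⋯` of a finite string. -/
def mIdx : List ℕ+ → ℤ
  | [] => 0
  | a :: l => (a : ℤ) - mIdx l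

/-- The matching index of a rational number: `⟦r⟧ = ⟦S₀(r)⟧`. -/
def mIdxR (r : ℝ) : ℤ := mIdx (evenExp r)

/-- `B(t) = {x ∈ [0,1] : G^k(x) ≥ t for all k}`. -/
def BSet (t : ℝ) : Set ℝ := {x ∈ Set.Icc (0 : ℝ) 1 | ∀ k : ℕ, gaussMap^[k] x ≥ t}

/-- The regular Cantor set `K(Σ)`: numbers whose continued fraction expansion is an
infinite concatenation of strings from `Σ`. -/
def KSet (SS : Set (List ℕ+)) : Set ℝ :=
  {x | ∃ B : ℕ → List ℕ+, (∀ n, B n ∈ SS) ∧ (∀ n, B n ≠ []) ∧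
    x = cfValInf (flattenBlocks B)}

/-- The set of untuned parameters `UT = [0,g] \ ⋃_{r ∈ Q_E} W_r`. -/
def UTset : Set ℝ := Set.Icc 0 gGolden \ ⋃ r ∈ QE, Wwin r

/-- The set `Q_UT` of untuned rationals. -/
def QUT : Set ℝ := {r ∈ QE | ¬ ∃ s ∈ QE, ∃ p ∈ QE, r = tune s p}

/-- The order `S << T` on finite strings of positive integers. -/
def strLL (S T : List ℕ+) : Prop :=
  ∃ k, k < S.length ∧ k < T.length ∧ (∀ i < k, S.getD i 1 = T.getD i 1) ∧
    (if k % 2 = 1 then S.getD k 1 < T.getD k 1 else T.getD k 1 < S.getD k 1)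

/-- A finite string is dominant if it has even length and is `<<`-smaller than
all of its proper suffixes. -/
def Dominant (S : List ℕ+) : Prop :=
  Even S.length ∧ ∀ A B : List ℕ+, A ≠ [] → B ≠ [] → S = A ++ B → strLL S B

/-- The α-continued fraction transformation `T_α`. -/
def Talpha (α : ℝ) (x : ℝ) : ℝ :=
  if x = 0 then 0 else 1 / |x| - ⌊1 / |x| + 1 - α⌋

end

/-!
Induct on the digit sum of `S₀(r)`. If `r = τ_s(p)` with `s, p ∈ Q_E`, then `S₀(r)` is the
substituted string `S₀(p)`, and since `S₁(s)` and `S₀(s)` have the same digit sum (they are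
`l (c+1)` and `l c 1` in some order), the digit sum of `S₀(r)` is the product of those of
`S₀(s)` and `S₀(p)`, both at least `2`. The factorizations of `s` and `p` can then be
concatenated because the substitutions compose: `τ_{τ_u(v)} = τ_u ∘ τ_v` on rationals.
-/

def ratIoo : Set ℝ := {x | x ∈ Ioo (0 : ℝ) 1 ∧ ∃ q : ℚ, (q : ℝ) = x}

lemma QE_subset_ratIoo : QE ⊆ ratIoo := fun _ hr => ⟨hr.1, hr.2.1⟩

lemma cfVal_cons (a : ℕ+) (l : List ℕ+) : cfVal (a :: l) = 1 / ((a : ℝ) + cfVal l) := rfl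

lemma one_le_pnat_cast (a : ℕ+) : (1 : ℝ) ≤ a := Nat.one_le_cast.mpr a.pos

lemma cfVal_nonneg (l : List ℕ+) : 0 ≤ cfVal l := by
  cases l with
  | nil => rfl
  | cons a l => rw [cfVal_cons]; have := one_le_pnat_cast a; have := cfVal_nonneg l; positivity

lemma cfVal_le_one (l : List ℕ+) : cfVal l ≤ 1 := by
  cases l with
  | nil => simp [cfVal]
  | cons a l =>
    rw [cfVal_cons, div_le_one (by linarith [one_le_pnat_cast a, cfVal_nonneg l])]
    linarith [one_le_pnat_cast a, cfVal_nonneg l]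

lemma cfVal_pos {l : List ℕ+} (hl : l ≠ []) : 0 < cfVal l := by
  obtain ⟨a, l, rfl⟩ := List.exists_cons_of_ne_nil hl
  rw [cfVal_cons]; have := one_le_pnat_cast a; have := cfVal_nonneg l; positivity

lemma cfVal_lt_one : ∀ {l : List ℕ+}, 2 ≤ l.length → cfVal l < 1
  | a :: b :: l, _ => by
    have := cfVal_pos (List.cons_ne_nil b l)
    rw [cfVal_cons, div_lt_one (by linarith [one_le_pnat_cast a])]
    linarith [one_le_pnat_cast a]

lemma exists_rat_eq_cfVal (l : List ℕ+) : ∃ q : ℚ, (q : ℝ) = cfVal l := by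
  induction l with
  | nil => exact ⟨0, by simp [cfVal]⟩
  | cons a l ih =>
    obtain ⟨q, hq⟩ := ih
    exact ⟨1 / ((a : ℚ) + q), by rw [cfVal_cons, ← hq]; push_cast; rfl⟩

lemma cfVal_mem_ratIoo {l : List ℕ+} (hl : 2 ≤ l.length) : cfVal l ∈ ratIoo :=
  ⟨⟨cfVal_pos (List.ne_nil_of_length_pos (by omega)), cfVal_lt_one hl⟩,
    exists_rat_eq_cfVal l⟩

lemma eq_nil_of_cfVal_eq_zero {l : List ℕ+} (h : cfVal l = 0) : l = [] := by
  by_contra hl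
  exact (cfVal_pos hl).ne' h

lemma eq_singleton_one_of_cfVal_eq_one {l : List ℕ+} (h : cfVal l = 1) : l = [1] := by
  obtain _ | ⟨a, l⟩ := l
  · simp [cfVal] at h
  have hsum : (a : ℝ) + cfVal l = 1 := by
    rw [cfVal_cons, div_eq_one_iff_eq (by linarith [one_le_pnat_cast a, cfVal_nonneg l])] at h
    exact h.symm
  have hl : cfVal l = 0 := by linarith [one_le_pnat_cast a, cfVal_nonneg l]
  have ha : (a : ℝ) = 1 := by linarith
  have ha' : a = 1 := PNat.coe_eq_one_iff.mp (by exact_mod_cast ha)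
  rw [eq_nil_of_cfVal_eq_zero hl, ha']

/-- Since `cfVal` takes values in `[0, 1]`, two expansions can only start with different digits
`a < b` in the degenerate situation `[…, a, 1] = […, a + 1]`. -/
lemma tails_of_add_cfVal_eq {a b : ℕ+} {l m : List ℕ+} (hab : a < b)
    (h : (a : ℝ) + cfVal l = b + cfVal m) : l = [1] ∧ m = [] := by
  have hab' : (a : ℝ) + 1 ≤ b := by exact_mod_cast hab
  have := cfVal_le_one l
  have := cfVal_nonneg m
  exact ⟨eq_singleton_one_of_cfVal_eq_one (by linarith),
    eq_nil_of_cfVal_eq_zero (by linarith)⟩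

theorem eq_of_cfVal_eq {l m : List ℕ+} (h : cfVal l = cfVal m)
    (hpar : l.length % 2 = m.length % 2) : l = m := by
  induction l generalizing m with
  | nil => exact (eq_nil_of_cfVal_eq_zero h.symm).symm
  | cons a l ih =>
    obtain _ | ⟨b, m⟩ := m
    · exact absurd h (cfVal_pos (List.cons_ne_nil a l)).ne'
    have hsum : (a : ℝ) + cfVal l = b + cfVal m := by
      rw [cfVal_cons, cfVal_cons] at h
      exact inv_injective (by simpa only [one_div] using h)
    simp only [List.length_cons] at hpar
    rcases lt_trichotomy a b with hab | rfl | hab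
    · obtain ⟨rfl, rfl⟩ := tails_of_add_cfVal_eq hab hsum
      simp at hpar
    · rw [ih (by linarith) (by omega)]
    · obtain ⟨rfl, rfl⟩ := tails_of_add_cfVal_eq hab hsum.symm
      simp at hpar

lemma cfVal_append_congr (l : List ℕ+) {m m' : List ℕ+} (h : cfVal m = cfVal m') :
    cfVal (l ++ m) = cfVal (l ++ m') := by
  induction l with
  | nil => exact h
  | cons a l ih => rw [List.cons_append, List.cons_append, cfVal_cons, cfVal_cons, ih]

lemma cfVal_append_succ (l : List ℕ+) (c : ℕ+) :
    cfVal (l ++ [c + 1]) = cfVal (l ++ [c, 1]) := by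
  apply cfVal_append_congr
  simp [cfVal]

/-- Euclid's algorithm. -/
lemma exists_cfVal_eq_div (n d : ℕ) (hn : 0 < n) (hnd : n < d) :
    ∃ (l : List ℕ+) (c : ℕ+), cfVal (l ++ [c + 1]) = n / d := by
  induction n using Nat.strong_induction_on generalizing d with
  | _ n ih =>
  have hn' : (0 : ℝ) < n := by exact_mod_cast hn
  have hq : 1 ≤ d / n := (Nat.one_le_div_iff hn).mpr hnd.le
  have hdiv : ((d / n : ℕ) : ℝ) * n + (d % n : ℕ) = d := by
    exact_mod_cast (Nat.div_add_mod' d n)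
  rcases Nat.eq_zero_or_pos (d % n) with hr | hr
  · have hq2 : 2 ≤ d / n := by
      by_contra! h
      have := Nat.div_add_mod' d n
      interval_cases h : d / n; omega
    refine ⟨[], Nat.toPNat' (d / n - 1), ?_⟩
    have hc : ((Nat.toPNat' (d / n - 1) + 1 : ℕ+) : ℝ) = (d / n : ℕ) := by
      rw [PNat.add_coe, Nat.toPNat'_coe, if_pos (by omega)]; push_cast [Nat.sub_add_cancel hq]; rfl
    rw [List.nil_append, cfVal_cons, hc, ← hdiv, hr]
    simp only [cfVal, Nat.cast_zero, add_zero]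
    field_simp
  · obtain ⟨l, c, hl⟩ := ih (d % n) (Nat.mod_lt d hn) n hr (Nat.mod_lt d hn)
    refine ⟨Nat.toPNat' (d / n) :: l, c, ?_⟩
    rw [List.cons_append, cfVal_cons, hl, Nat.toPNat'_coe, if_pos (by omega), ← hdiv]
    field_simp

lemma exists_twin_expansions {x : ℝ} (hx : x ∈ ratIoo) :
    ∃ (l : List ℕ+) (c : ℕ+), cfVal (l ++ [c + 1]) = x ∧ cfVal (l ++ [c, 1]) = x := by
  obtain ⟨⟨hx0, hx1⟩, q, rfl⟩ := hx
  have hnum : 0 < q.num := Rat.num_pos.mpr (by exact_mod_cast hx0)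
  have hlt : q.num < q.den := Rat.num_lt_denom_iff.mpr (by exact_mod_cast hx1)
  obtain ⟨l, c, h⟩ := exists_cfVal_eq_div q.num.toNat q.den (by omega) (by omega)
  have hq : ((q.num.toNat : ℕ) : ℝ) / q.den = q := by
    rw [Rat.cast_def]; congr 1; exact_mod_cast Int.toNat_of_nonneg hnum.le
  exact ⟨l, c, h.trans hq, (cfVal_append_succ l c).symm.trans (h.trans hq)⟩

section expansions

variable {x : ℝ}

lemma exists_even_odd_expansions (hx : x ∈ ratIoo) :
    (∃ S : List ℕ+, S ≠ [] ∧ Even S.length ∧ cfVal S = x) ∧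
      ∃ S : List ℕ+, S ≠ [] ∧ Odd S.length ∧ cfVal S = x := by
  obtain ⟨l, c, h, h'⟩ := exists_twin_expansions hx
  rcases Nat.even_or_odd (l ++ [c + 1]).length with he | ho
  · exact ⟨⟨_, by simp, he, h⟩, _, by simp, by simpa [add_assoc] using he.add_one, h'⟩
  · exact ⟨⟨_, by simp, by simpa [add_assoc] using ho.add_one, h'⟩, _, by simp, ho, h⟩

lemma evenExp_spec (hx : x ∈ ratIoo) :
    evenExp x ≠ [] ∧ Even (evenExp x).length ∧ cfVal (evenExp x) = x := by
  rw [evenExp, dif_pos (exists_even_odd_expansions hx).1]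
  exact (exists_even_odd_expansions hx).1.choose_spec

lemma oddExp_spec (hx : x ∈ ratIoo) :
    oddExp x ≠ [] ∧ Odd (oddExp x).length ∧ cfVal (oddExp x) = x := by
  rw [oddExp, dif_pos (exists_even_odd_expansions hx).2]
  exact (exists_even_odd_expansions hx).2.choose_spec

lemma two_le_length_evenExp (hx : x ∈ ratIoo) : 2 ≤ (evenExp x).length := by
  obtain ⟨hne, ⟨k, hk⟩, -⟩ := evenExp_spec hx
  have := List.length_pos_iff.mpr hne
  omega

lemma evenExp_eq {S : List ℕ+} (hS : S ≠ []) (he : Even S.length) (hv : cfVal S = x) :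
    evenExp x = S := by
  have h : ∃ S : List ℕ+, S ≠ [] ∧ Even S.length ∧ cfVal S = x := ⟨S, hS, he, hv⟩
  obtain ⟨-, he', hv'⟩ := h.choose_spec
  rw [evenExp, dif_pos h]
  exact eq_of_cfVal_eq (hv'.trans hv.symm) (by rw [Nat.even_iff.mp he, Nat.even_iff.mp he'])

lemma oddExp_eq {S : List ℕ+} (ho : Odd S.length) (hv : cfVal S = x) : oddExp x = S := by
  have h : ∃ S : List ℕ+, S ≠ [] ∧ Odd S.length ∧ cfVal S = x :=
    ⟨S, List.ne_nil_of_length_pos ho.pos, ho, hv⟩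
  obtain ⟨-, ho', hv'⟩ := h.choose_spec
  rw [oddExp, dif_pos h]
  exact eq_of_cfVal_eq (hv'.trans hv.symm) (by rw [Nat.odd_iff.mp ho, Nat.odd_iff.mp ho'])

/-- `S₀(x)` and `S₁(x)` are `l (c + 1)` and `l c 1` in some order. -/
lemma apply_oddExp_eq_apply_evenExp {α : Type*} (hx : x ∈ ratIoo) (f : List ℕ+ → α)
    (hf : ∀ l c, f (l ++ [c + 1]) = f (l ++ [c, 1])) : f (oddExp x) = f (evenExp x) := by
  obtain ⟨l, c, h, h'⟩ := exists_twin_expansions hx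
  rcases Nat.even_or_odd (l ++ [c + 1]).length with he | ho
  · rw [evenExp_eq (by simp) he h, oddExp_eq (by simpa [add_assoc] using he.add_one) h', hf]
  · rw [oddExp_eq ho h, evenExp_eq (by simp) (by simpa [add_assoc] using ho.add_one) h', hf]

end expansions

section tuning

variable {u : ℝ}

@[simp] lemma tuneList_nil : tuneList u [] = [] := rfl

@[simp] lemma tuneList_cons (a : ℕ+) (A : List ℕ+) :
    tuneList u (a :: A) = tuneDigit u a ++ tuneList u A := by
  simp [tuneList]

lemma tuneList_append (A B : List ℕ+) : tuneList u (A ++ B) = tuneList u A ++ tuneList u B := by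
  simp [tuneList]

lemma tuneList_flatten (L : List (List ℕ+)) :
    tuneList u L.flatten = (L.map (tuneList u)).flatten := by
  induction L with
  | nil => rfl
  | cons A L ih => simp only [List.flatten_cons, tuneList_append, ih, List.map_cons]

lemma odd_length_tuneDigit (hu : u ∈ ratIoo) (a : ℕ+) : Odd (tuneDigit u a).length := by
  simp only [tuneDigit, List.length_append, List.length_flatten, List.map_replicate,
    List.sum_replicate, smul_eq_mul]
  exact (oddExp_spec hu).2.1.add_even ((evenExp_spec hu).2.1.mul_left _)

lemma length_tuneList_mod_two (hu : u ∈ ratIoo) (A : List ℕ+) :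
    (tuneList u A).length % 2 = A.length % 2 := by
  induction A with
  | nil => rfl
  | cons a A ih =>
    have := Nat.odd_iff.mp (odd_length_tuneDigit hu a)
    simp only [tuneList_cons, List.length_append, List.length_cons]
    omega

lemma length_le_length_tuneList (hu : u ∈ ratIoo) (A : List ℕ+) :
    A.length ≤ (tuneList u A).length := by
  induction A with
  | nil => rfl
  | cons a A ih =>
    have := (odd_length_tuneDigit hu a).pos
    simp only [tuneList_cons, List.length_append, List.length_cons]
    omega

lemma tune_eq_cfVal_tuneList {x : ℝ} (hx : x ∈ ratIoo) (u : ℝ) :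
    tune u x = cfVal (tuneList u (evenExp x)) := by
  rw [tune, if_neg hx.1.1.ne', if_pos hx.2]

lemma cfVal_tuneList_append_succ (hu : u ∈ ratIoo) (l : List ℕ+) (c : ℕ+) :
    cfVal (tuneList u (l ++ [c + 1])) = cfVal (tuneList u (l ++ [c, 1])) := by
  have hc : ((c + 1 : ℕ+) : ℕ) - 1 = ((c : ℕ) - 1) + 1 := by have := c.pos; simp; omega
  simp only [tuneList_append, tuneList_cons, tuneList_nil, tuneDigit, hc, List.replicate_succ',
    List.flatten_append, PNat.one_coe, Nat.sub_self, List.replicate_zero, List.flatten_nil]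
  simpa only [List.append_assoc, List.flatten_cons, List.flatten_nil, List.append_nil] using
    cfVal_append_congr
      (tuneList u l ++ oddExp u ++ (List.replicate ((c : ℕ) - 1) (evenExp u)).flatten)
      ((evenExp_spec hu).2.2.trans (oddExp_spec hu).2.2.symm)

lemma evenExp_tune {x : ℝ} (hu : u ∈ ratIoo) (hx : x ∈ ratIoo) :
    evenExp (tune u x) = tuneList u (evenExp x) := by
  have hlen := (two_le_length_evenExp hx).trans (length_le_length_tuneList hu (evenExp x))
  refine evenExp_eq (List.ne_nil_of_length_pos (by omega)) ?_ (tune_eq_cfVal_tuneList hx u).symm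
  rw [Nat.even_iff, length_tuneList_mod_two hu, ← Nat.even_iff]
  exact (evenExp_spec hx).2.1

lemma oddExp_tune {x : ℝ} (hu : u ∈ ratIoo) (hx : x ∈ ratIoo) :
    oddExp (tune u x) = tuneList u (oddExp x) := by
  refine oddExp_eq ?_ ?_
  · rw [Nat.odd_iff, length_tuneList_mod_two hu, ← Nat.odd_iff]
    exact (oddExp_spec hx).2.1
  · rw [tune_eq_cfVal_tuneList hx u]
    exact apply_oddExp_eq_apply_evenExp hx (fun l => cfVal (tuneList u l))
      (cfVal_tuneList_append_succ hu)

lemma tune_mem_ratIoo {x : ℝ} (hu : u ∈ ratIoo) (hx : x ∈ ratIoo) : tune u x ∈ ratIoo := by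
  rw [tune_eq_cfVal_tuneList hx u]
  exact cfVal_mem_ratIoo ((two_le_length_evenExp hx).trans (length_le_length_tuneList hu _))

lemma tuneList_tune {v : ℝ} (hu : u ∈ ratIoo) (hv : v ∈ ratIoo) (A : List ℕ+) :
    tuneList (tune u v) A = tuneList u (tuneList v A) := by
  induction A with
  | nil => rfl
  | cons a A ih =>
    rw [tuneList_cons, tuneList_cons, tuneList_append, ih, tuneDigit, tuneDigit,
      oddExp_tune hu hv, evenExp_tune hu hv, tuneList_append, tuneList_flatten, List.map_replicate]

lemma tune_tune {v x : ℝ} (hu : u ∈ ratIoo) (hv : v ∈ ratIoo) (hx : x ∈ ratIoo) :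
    tune (tune u v) x = tune u (tune v x) := by
  rw [tune_eq_cfVal_tuneList hx, tuneList_tune hu hv,
    tune_eq_cfVal_tuneList (tune_mem_ratIoo hv hx), evenExp_tune hv hx]

lemma foldr_tune_mem_ratIoo {L : List ℝ} (hL : ∀ s ∈ L, s ∈ ratIoo) (hu : u ∈ ratIoo) :
    L.foldr tune u ∈ ratIoo := by
  induction L with
  | nil => exact hu
  | cons s L ih =>
    rw [List.forall_mem_cons] at hL
    exact tune_mem_ratIoo hL.1 (ih hL.2)

lemma tune_foldr_tune {L : List ℝ} (hL : ∀ s ∈ L, s ∈ ratIoo) {x : ℝ} (hu : u ∈ ratIoo)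
    (hx : x ∈ ratIoo) : tune (L.foldr tune u) x = L.foldr tune (tune u x) := by
  induction L with
  | nil => rfl
  | cons s L ih =>
    rw [List.forall_mem_cons] at hL
    rw [List.foldr_cons, List.foldr_cons, tune_tune hL.1 (foldr_tune_mem_ratIoo hL.2 hu) hx,
      ih hL.2]

end tuning

section digitSum

def digitSum (l : List ℕ+) : ℕ := (l.map (↑)).sum

@[simp] lemma digitSum_nil : digitSum [] = 0 := rfl

@[simp] lemma digitSum_cons (a : ℕ+) (l : List ℕ+) : digitSum (a :: l) = a + digitSum l := by
  simp [digitSum]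

@[simp] lemma digitSum_append (l m : List ℕ+) : digitSum (l ++ m) = digitSum l + digitSum m := by
  simp [digitSum]

lemma digitSum_flatten (L : List (List ℕ+)) : digitSum L.flatten = (L.map digitSum).sum := by
  induction L with
  | nil => rfl
  | cons l L ih => simp [ih]

lemma length_le_digitSum (l : List ℕ+) : l.length ≤ digitSum l := by
  induction l with
  | nil => rfl
  | cons a l ih => have := a.pos; simp only [List.length_cons, digitSum_cons]; omega

variable {u : ℝ}

lemma two_le_digitSum_evenExp (hu : u ∈ ratIoo) : 2 ≤ digitSum (evenExp u) :=
  (two_le_length_evenExp hu).trans (length_le_digitSum _)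

lemma digitSum_oddExp (hu : u ∈ ratIoo) : digitSum (oddExp u) = digitSum (evenExp u) :=
  apply_oddExp_eq_apply_evenExp hu digitSum fun l c => by simp

lemma digitSum_tuneDigit (hu : u ∈ ratIoo) (a : ℕ+) :
    digitSum (tuneDigit u a) = digitSum (evenExp u) * a := by
  rw [tuneDigit, digitSum_append, digitSum_flatten, digitSum_oddExp hu, List.map_replicate,
    List.sum_replicate, smul_eq_mul, ← Nat.succ_pred_eq_of_pos a.pos, Nat.succ_sub_one,
    Nat.mul_succ]
  ring

lemma digitSum_tuneList (hu : u ∈ ratIoo) (A : List ℕ+) :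
    digitSum (tuneList u A) = digitSum (evenExp u) * digitSum A := by
  induction A with
  | nil => rfl
  | cons a A ih => rw [tuneList_cons, digitSum_append, ih, digitSum_tuneDigit hu, digitSum_cons,
      mul_add]

end digitSum

/-- Every `r ∈ Q_E` factors as `r = τ_{r_m} ∘ ⋯ ∘ τ_{r_1}(r_0)` with all
`r_i ∈ Q_UT` (when the list is empty this means `r = r_0 ∈ Q_UT`). -/
theorem untuned_factorization (r : ℝ) (hr : r ∈ QE) :
    ∃ r₀ ∈ QUT, ∃ L : List ℝ, (∀ s ∈ L, s ∈ QUT) ∧ r = L.foldr tune r₀ := by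
  induction hn : digitSum (evenExp r) using Nat.strong_induction_on generalizing r with
  | _ n ih =>
  by_cases hU : r ∈ QUT
  · exact ⟨r, hU, [], by simp, rfl⟩
  obtain ⟨s, hs, p, hp, rfl⟩ : ∃ s ∈ QE, ∃ p ∈ QE, r = tune s p :=
    not_not.mp fun h => hU ⟨hr, h⟩
  have hs_rat := QE_subset_ratIoo hs
  have hp_rat := QE_subset_ratIoo hp
  rw [evenExp_tune hs_rat hp_rat, digitSum_tuneList hs_rat] at hn
  have h2s := two_le_digitSum_evenExp hs_rat
  have h2p := two_le_digitSum_evenExp hp_rat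
  obtain ⟨p₀, hp₀, Lp, hLp, rfl⟩ := ih _ (by nlinarith) p hp rfl
  obtain ⟨s₀, hs₀, Ls, hLs, rfl⟩ := ih _ (by nlinarith) s hs rfl
  have hQUT : ∀ t ∈ QUT, t ∈ ratIoo := fun t ht => QE_subset_ratIoo ht.1
  refine ⟨p₀, hp₀, Ls ++ s₀ :: Lp, ?_, ?_⟩
  · simpa [or_imp, forall_and] using ⟨hLs, hs₀, hLp⟩
  · rw [tune_foldr_tune (fun t ht => hQUT t (hLs t ht)) (hQUT s₀ hs₀) hp_rat,
      List.foldr_append, List.foldr_cons]
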